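/- arXiv:math/0602436 — 2 statements merged into one kernel-verified Lean document; each statement's English description precedes it below -/
import Mathlib

section
/- Let Γ be a simple connected graph of order n ≥ 2 with maximum degree Δ, and let μ be the algebraic connectivity of Γ (the second smallest eigenvalue of the Laplacian matrix of Γ). Then every strong defensive alliance S in Γ satisfies |S| ≥ ⌈n(μ − ⌊Δ/2⌋)/μ⌉; in particular the strong defensive alliance number satisfies â(Γ) ≥ ⌈n(μ − ⌊Δ/2⌋)/μ⌉. -/
/-!
Put `s = |S|` and test the Rayleigh principle for `μ` on `x = n·1_S − s·1`, which is orthogonal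
to the all-ones vector spanning the kernel of the Laplacian `L`: this gives
`μ‖x‖² = μ·n·s·(n − s) ≤ xᵀLx = n²·e(S, V∖S)`. In a strong defensive alliance each `v ∈ S` has
at most `⌊deg v / 2⌋ ≤ ⌊Δ/2⌋` neighbours outside `S`, so `e(S, V∖S) ≤ s·⌊Δ/2⌋`, and dividing by
`n·s` leaves `μ(n − s) ≤ n⌊Δ/2⌋`, which rearranges to the bound.
-/

open Finset SimpleGraph

/-- `μ` is the second smallest (counted with multiplicity) value of the family `e`. -/
def IsSecondSmallest {ι : Type*} (e : ι → ℝ) (μ : ℝ) : Prop :=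
  ∃ i₀ i₁ : ι, i₀ ≠ i₁ ∧ e i₀ ≤ μ ∧ e i₁ = μ ∧ ∀ j : ι, j ≠ i₀ → μ ≤ e j

/-- `lam` is the largest value of the family `e`. -/
def IsLargest {ι : Type*} (e : ι → ℝ) (lam : ℝ) : Prop :=
  (∃ i : ι, e i = lam) ∧ ∀ i : ι, e i ≤ lam

open Matrix

namespace Matrix.IsHermitian

variable {m : Type*} [Fintype m] [DecidableEq m] {A : Matrix m m ℝ} (hA : A.IsHermitian)

lemma dotProduct_eq_sum_eigenvectorBasis (x y : m → ℝ) :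
    x ⬝ᵥ y = ∑ j, (⇑(hA.eigenvectorBasis j) ⬝ᵥ x) * (⇑(hA.eigenvectorBasis j) ⬝ᵥ y) := by
  have := hA.eigenvectorBasis.sum_inner_mul_inner (WithLp.toLp 2 x) (WithLp.toLp 2 y)
  simp only [EuclideanSpace.inner_eq_star_dotProduct, star_trivial] at this
  rw [dotProduct_comm, ← this]
  simp_rw [dotProduct_comm y]

lemma eigenvectorBasis_dotProduct_mulVec (j : m) (y : m → ℝ) :
    ⇑(hA.eigenvectorBasis j) ⬝ᵥ (A *ᵥ y) =
      hA.eigenvalues j * (⇑(hA.eigenvectorBasis j) ⬝ᵥ y) := by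
  rw [dotProduct_mulVec, ← mulVec_transpose, ← conjTranspose_eq_transpose_of_trivial, hA.eq,
    hA.mulVec_eigenvectorBasis, smul_dotProduct, smul_eq_mul]

lemma dotProduct_mulVec_eq_sum_eigenvalues (x : m → ℝ) :
    x ⬝ᵥ (A *ᵥ x) = ∑ j, hA.eigenvalues j * (⇑(hA.eigenvectorBasis j) ⬝ᵥ x) ^ 2 := by
  rw [hA.dotProduct_eq_sum_eigenvectorBasis]
  refine sum_congr rfl fun j _ => ?_
  rw [eigenvectorBasis_dotProduct_mulVec]
  ring

lemma mul_dotProduct_self_le_of_eigenvectorBasis_dotProduct_eq_zero {μ : ℝ} {i₀ : m}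
    (hge : ∀ j ≠ i₀, μ ≤ hA.eigenvalues j) {x : m → ℝ}
    (hx : ⇑(hA.eigenvectorBasis i₀) ⬝ᵥ x = 0) :
    μ * (x ⬝ᵥ x) ≤ x ⬝ᵥ (A *ᵥ x) := by
  rw [hA.dotProduct_eq_sum_eigenvectorBasis x x, hA.dotProduct_mulVec_eq_sum_eigenvalues, mul_sum]
  refine sum_le_sum fun j _ => ?_
  rcases eq_or_ne j i₀ with rfl | hj
  · simp [hx]
  · rw [← sq]
    exact mul_le_mul_of_nonneg_right (hge j hj) (sq_nonneg _)

lemma eigenvectorBasis_dotProduct_eq_zero_of_mulVec_eq_zero {v : m → ℝ} (hv : A *ᵥ v = 0)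
    {j : m} (hj : hA.eigenvalues j ≠ 0) : ⇑(hA.eigenvectorBasis j) ⬝ᵥ v = 0 := by
  have := hA.eigenvectorBasis_dotProduct_mulVec j v
  rw [hv, dotProduct_zero, eq_comm, mul_eq_zero] at this
  exact this.resolve_left hj

/-- Since all eigenvalues but the `i₀`-th are positive, a kernel vector `v ≠ 0` is a nonzero
multiple of the `i₀`-th eigenvector, so `x ⟂ v` puts `x` in the span of the others. -/
lemma mul_dotProduct_self_le_of_dotProduct_eq_zero {μ : ℝ} (hμ : 0 < μ) {i₀ : m}
    (hge : ∀ j ≠ i₀, μ ≤ hA.eigenvalues j) {v : m → ℝ} (hv : A *ᵥ v = 0) (hv0 : v ≠ 0)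
    {x : m → ℝ} (hx : v ⬝ᵥ x = 0) :
    μ * (x ⬝ᵥ x) ≤ x ⬝ᵥ (A *ᵥ x) := by
  set b := hA.eigenvectorBasis
  have hbv : ∀ j ≠ i₀, ⇑(b j) ⬝ᵥ v = 0 := fun j hj =>
    hA.eigenvectorBasis_dotProduct_eq_zero_of_mulVec_eq_zero hv (hμ.trans_le (hge j hj)).ne'
  have hexpand : ∀ y, v ⬝ᵥ y = (⇑(b i₀) ⬝ᵥ v) * (⇑(b i₀) ⬝ᵥ y) := fun y => by
    rw [hA.dotProduct_eq_sum_eigenvectorBasis]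
    exact sum_eq_single i₀ (fun j _ hj => by rw [hbv j hj, zero_mul]) (by simp)
  have hbv₀ : ⇑(b i₀) ⬝ᵥ v ≠ 0 := fun h => hv0 <| dotProduct_self_eq_zero.mp <| by
    rw [hexpand, h, zero_mul]
  refine hA.mul_dotProduct_self_le_of_eigenvectorBasis_dotProduct_eq_zero hge ?_
  rw [hexpand, mul_eq_zero] at hx
  exact hx.resolve_left hbv₀

end Matrix.IsHermitian

namespace SimpleGraph

variable {V : Type*} [Fintype V] [DecidableEq V] (G : SimpleGraph V) [DecidableRel G.Adj]

lemma lapMatrix_mulVec_one {R : Type*} [NonAssocRing R] : G.lapMatrix R *ᵥ 1 = 0 :=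
  G.lapMatrix_mulVec_const_eq_zero

lemma dotProduct_lapMatrix_mulVec_add_smul_one {R : Type*} [CommRing R] (x : V → R) (c : R) :
    (x + c • 1) ⬝ᵥ (G.lapMatrix R *ᵥ (x + c • 1)) = x ⬝ᵥ (G.lapMatrix R *ᵥ x) := by
  have h1 : (1 : V → R) ⬝ᵥ (G.lapMatrix R *ᵥ x) = 0 := by
    rw [dotProduct_mulVec, ← mulVec_transpose, (G.isSymm_lapMatrix R).eq, lapMatrix_mulVec_one,
      zero_dotProduct]
  simp [mulVec_add, mulVec_smul, lapMatrix_mulVec_one, add_dotProduct, h1]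

lemma indicator_dotProduct_lapMatrix_mulVec_indicator {R : Type*} [CommRing R] (S : Finset V) :
    (S : Set V).indicator 1 ⬝ᵥ (G.lapMatrix R *ᵥ (S : Set V).indicator 1) =
      ∑ v ∈ S, (#(G.neighborFinset v \ S) : R) := by
  simp only [dotProduct, Set.indicator_apply, mem_coe, Pi.one_apply, ite_mul, one_mul, zero_mul,
    sum_ite_mem, univ_inter, lapMatrix_mulVec_apply]
  refine sum_congr rfl fun v hv => ?_
  rw [if_pos hv, mul_one, sum_const, nsmul_one, ← card_neighborFinset_eq_degree,
    ← card_sdiff_add_card_inter (G.neighborFinset v) S]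
  push_cast
  ring

theorem eigenvalue_mul_card_mul_card_compl_le (hL : (G.lapMatrix ℝ).IsHermitian) {μ : ℝ}
    (hμ : 0 < μ) {i₀ : V} (hge : ∀ j ≠ i₀, μ ≤ hL.eigenvalues j) (S : Finset V) :
    μ * #S * #Sᶜ ≤ (Fintype.card V : ℝ) * ∑ v ∈ S, (#(G.neighborFinset v \ S) : ℝ) := by
  have : Nonempty V := ⟨i₀⟩
  set n : ℝ := (Fintype.card V : ℝ)
  have hn : 0 < n := Nat.cast_pos.mpr Fintype.card_pos
  set s : ℝ := (#S : ℝ)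
  set u : V → ℝ := (S : Set V).indicator 1
  have hu : u ⬝ᵥ u = s := by simp [u, s, dotProduct, Set.indicator_apply]
  have h1u : 1 ⬝ᵥ u = s := by simp [u, s, dotProduct, Set.indicator_apply]
  have h11 : (1 : V → ℝ) ⬝ᵥ 1 = n := by simp [n, dotProduct]
  set x : V → ℝ := n • u + (-s) • 1
  have horth : 1 ⬝ᵥ x = 0 := by
    simp only [x, dotProduct_add, dotProduct_smul, h1u, h11, smul_eq_mul]
    ring
  have hnorm : x ⬝ᵥ x = n * s * (n - s) := by
    simp only [x, dotProduct_add, add_dotProduct, dotProduct_smul, smul_dotProduct, hu, h1u, h11,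
      dotProduct_comm u 1, smul_eq_mul]
    ring
  have hquad : x ⬝ᵥ (G.lapMatrix ℝ *ᵥ x) = n ^ 2 * ∑ v ∈ S, (#(G.neighborFinset v \ S) : ℝ) := by
    simp only [x, G.dotProduct_lapMatrix_mulVec_add_smul_one, mulVec_smul, dotProduct_smul,
      smul_dotProduct, u, G.indicator_dotProduct_lapMatrix_mulVec_indicator, smul_eq_mul]
    ring
  have hrayleigh := hL.mul_dotProduct_self_le_of_dotProduct_eq_zero hμ hge G.lapMatrix_mulVec_one
    one_ne_zero horth
  rw [hnorm, hquad] at hrayleigh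
  rw [card_compl, Nat.cast_sub (card_le_univ S)]
  refine le_of_mul_le_mul_left ?_ hn
  linarith

lemma card_neighborFinset_sdiff_le_maxDegree_div_two {S : Finset V} {v : V}
    (hv : #(G.neighborFinset v \ S) ≤ #(G.neighborFinset v ∩ S)) :
    #(G.neighborFinset v \ S) ≤ G.maxDegree / 2 := by
  have hsplit := card_sdiff_add_card_inter (G.neighborFinset v) S
  have hdeg : #(G.neighborFinset v) ≤ G.maxDegree :=
    (card_neighborFinset_eq_degree G v).trans_le (G.degree_le_maxDegree v)
  omega

end SimpleGraph

theorem stmt_2_general {V : Type*} [Fintype V] [DecidableEq V]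
    (G : SimpleGraph V) [DecidableRel G.Adj]
    (n : ℕ) (hn : Fintype.card V = n)
    (D : ℕ) (hD : G.maxDegree = D)
    (mu : ℝ)
    (hmu : ∃ hL : (G.lapMatrix ℝ).IsHermitian, IsSecondSmallest hL.eigenvalues mu)
    (S : Finset V) (hS : S.Nonempty)
    (hdef : ∀ v ∈ S, (G.neighborFinset v \ S).card ≤ (G.neighborFinset v ∩ S).card)
    :
    ⌈(n : ℝ) * (mu - ((D / 2 : ℕ) : ℝ)) / mu⌉ ≤ (S.card : ℤ) := by
  obtain ⟨hL, i₀, i₁, -, -, hmu, hge⟩ := hmu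
  have hmu0 : 0 ≤ mu := hmu ▸ (G.posSemidef_lapMatrix ℝ).eigenvalues_nonneg i₁
  rcases hmu0.eq_or_lt with rfl | hpos
  · simp -- `x / 0 = 0`, so the bound is vacuous at `μ = 0`
  have hcut := G.eigenvalue_mul_card_mul_card_compl_le hL hpos hge S
  have hboundary : ∑ v ∈ S, (#(G.neighborFinset v \ S) : ℝ) ≤ #S * (D / 2 : ℕ) := by
    rw [← hD]
    exact_mod_cast (sum_le_sum fun v hv => G.card_neighborFinset_sdiff_le_maxDegree_div_two
      (hdef v hv)).trans_eq (by rw [sum_const, smul_eq_mul])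
  rw [card_compl, Nat.cast_sub (card_le_univ S), hn] at hcut
  have hs : (0 : ℝ) < #S := Nat.cast_pos.mpr hS.card_pos
  have hkey : mu * (n - #S) ≤ n * (D / 2 : ℕ) := by
    have := mul_le_mul_of_nonneg_left hboundary (Nat.cast_nonneg (α := ℝ) n)
    refine le_of_mul_le_mul_left ?_ hs
    linarith
  rw [Int.ceil_le, div_le_iff₀ hpos]
  push_cast
  linarith

theorem stmt_2 {V : Type*} [Fintype V] [DecidableEq V]
    (G : SimpleGraph V) [DecidableRel G.Adj]
    (n : ℕ) (hn : Fintype.card V = n)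
    (hn2 : 2 ≤ n)
    (hconn : G.Connected)
    (D : ℕ) (hD : G.maxDegree = D)
    (mu : ℝ)
    (hmu : ∃ hL : (G.lapMatrix ℝ).IsHermitian, IsSecondSmallest hL.eigenvalues mu)
    (S : Finset V) (hS : S.Nonempty)
    (hdef : ∀ v ∈ S, (G.neighborFinset v \ S).card ≤ (G.neighborFinset v ∩ S).card)
    :
    ⌈(n : ℝ) * (mu - ((D / 2 : ℕ) : ℝ)) / mu⌉ ≤ (S.card : ℤ) :=
  stmt_2_general G n hn D hD mu hmu S hS hdef
end

section
/- Let Γ be a simple graph of order n with minimum degree δ and at least one edge, and let μ* be the Laplacian spectral radius of Γ (the largest eigenvalue of the Laplacian matrix of Γ). Then every global offensive alliance S in Γ satisfies |S| ≥ ⌈(n/μ*)·⌈(δ+1)/2⌉⌉; in particular the global offensive alliance number satisfies γ_{a_o}(Γ) ≥ ⌈(n/μ*)·⌈(δ+1)/2⌉⌉. -/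
/-!
Let `T = Sᶜ`, `s = |S|`, `m = |T|` and `c = ⌈(δ + 1)/2⌉`. Every `v ∈ T` has more neighbours in
`S` than in `T`, hence at least `c` of them, so the number `e(T, S)` of edges between `T` and `S`
is at least `m c`. The vector equal to `m` on `S` and `-s` on `T` has Laplacian quadratic form
`n² e(T, S)` and squared norm `s m n`, so the Rayleigh bound gives `n e(T, S) ≤ μ* s m`, whence
`n c ≤ μ* s` when `T ≠ ∅`. When `S = V` it suffices that `c` is at most the degree of a
non-isolated vertex, which is the Rayleigh quotient of a coordinate vector.
-/

open Finset SimpleGraph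

open Matrix

theorem Matrix.IsHermitian.dotProduct_mulVec_le {n : Type*} [Fintype n] [DecidableEq n]
    {A : Matrix n n ℝ} (hA : A.IsHermitian) {μ : ℝ} (h : ∀ i, hA.eigenvalues i ≤ μ)
    (x : n → ℝ) : x ⬝ᵥ (A *ᵥ x) ≤ μ * (x ⬝ᵥ x) := by
  have hpsd : (algebraMap ℝ (Matrix n n ℝ) μ - A).PosSemidef := by
    rw [posSemidef_iff_isHermitian_and_spectrum_nonneg]
    refine ⟨(isHermitian_diagonal _).sub hA, ?_⟩
    rw [← spectrum.singleton_sub_eq, hA.spectrum_real_eq_range_eigenvalues]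
    rintro _ ⟨_, rfl, _, ⟨i, rfl⟩, rfl⟩
    simpa using h i
  simpa [Algebra.algebraMap_eq_smul_one, sub_mulVec, smul_mulVec, dotProduct_sub]
    using hpsd.dotProduct_mulVec_nonneg x

namespace SimpleGraph

variable {V : Type*} [Fintype V] [DecidableEq V] (G : SimpleGraph V) [DecidableRel G.Adj]

theorem lapMatrix_dotProduct_mulVec_ite (S : Finset V) (a b : ℝ) :
    (fun v ↦ if v ∈ S then a else b) ⬝ᵥ
        (G.lapMatrix ℝ *ᵥ fun v ↦ if v ∈ S then a else b) =
      (a - b) ^ 2 * ∑ v ∈ Sᶜ, (#(G.neighborFinset v ∩ S) : ℝ) := by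
  rw [← toLinearMap₂'_apply', lapMatrix_toLinearMap₂']
  let c : V → V → ℝ := fun i j ↦ if i ∈ Sᶜ ∧ j ∈ G.neighborFinset i ∩ S then 1 else 0
  have hpair : ∀ i j, (if G.Adj i j then
      ((if i ∈ S then a else b) - if j ∈ S then a else b) ^ 2 else 0) =
      (a - b) ^ 2 * (c i j + c j i) := by
    intro i j
    by_cases hij : G.Adj i j
    · by_cases hi : i ∈ S <;> by_cases hj : j ∈ S <;>
        simp [c, hij, hij.symm, hi, hj, sub_sq_comm b a]
    · have hji : ¬G.Adj j i := fun h ↦ hij h.symm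
      simp [c, hij, hji]
  have hrow : ∀ i, ∑ j, c i j = if i ∈ Sᶜ then (#(G.neighborFinset i ∩ S) : ℝ) else 0 := by
    intro i
    split_ifs with hi <;> simp only [c, hi, true_and, false_and, if_false, sum_const_zero,
      sum_boole, filter_mem_eq_inter, univ_inter]
  simp_rw [hpair, ← mul_sum, sum_add_distrib]
  rw [sum_comm (f := fun i j ↦ c j i), sum_congr rfl fun i _ ↦ hrow i, sum_ite_mem, univ_inter]
  ring

theorem ceil_minDegree_add_one_div_two_le {S : Finset V} {v : V}
    (hv : #(G.neighborFinset v \ S) + 1 ≤ #(G.neighborFinset v ∩ S)) :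
    ⌈((G.minDegree : ℝ) + 1) / 2⌉ ≤ #(G.neighborFinset v ∩ S) := by
  have hsplit := card_sdiff_add_card_inter (G.neighborFinset v) S
  have hδ := G.minDegree_le_degree v
  rw [card_neighborFinset_eq_degree] at hsplit
  rw [Int.ceil_le, div_le_iff₀ two_pos]
  exact_mod_cast (by omega : G.minDegree + 1 ≤ #(G.neighborFinset v ∩ S) * 2)

section RayleighBound

variable {G} {μ : ℝ} (hμ : ∀ x : V → ℝ, x ⬝ᵥ (G.lapMatrix ℝ *ᵥ x) ≤ μ * (x ⬝ᵥ x))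
include hμ

theorem degree_le_of_lapMatrix_le (v : V) : (G.degree v : ℝ) ≤ μ := by
  simpa [mulVec_single, single_dotProduct, lapMatrix, degMatrix] using hμ (Pi.single v 1)

theorem card_mul_sum_card_neighborFinset_inter_le (S : Finset V) :
    Fintype.card V * ∑ v ∈ Sᶜ, (#(G.neighborFinset v ∩ S) : ℝ) ≤ μ * #S * #Sᶜ := by
  cases isEmpty_or_nonempty V
  · simp [eq_empty_of_isEmpty S]
  set s : ℝ := (#S : ℝ)
  set m : ℝ := (#Sᶜ : ℝ)
  have hn : (Fintype.card V : ℝ) = m + s := by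
    rw [← card_add_card_compl S, Nat.cast_add, add_comm]
  have hnorm : (fun v ↦ if v ∈ S then m else -s) ⬝ᵥ (fun v ↦ if v ∈ S then m else -s) =
      s * m * (m + s) := by
    simp only [dotProduct, apply_ite₂ (· * ·), sum_ite, filter_notMem_eq_sdiff,
      ← compl_eq_univ_sdiff, filter_mem_eq_of_subset (subset_univ S), sum_const, nsmul_eq_mul]
    ring
  have h := hμ fun v ↦ if v ∈ S then m else -s
  rw [lapMatrix_dotProduct_mulVec_ite, hnorm, sub_neg_eq_add, ← hn] at h
  refine le_of_mul_le_mul_left ?_ (Nat.cast_pos.mpr (Fintype.card_pos (α := V)))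
  linarith

theorem card_mul_ceil_le {u w : V} (huw : G.Adj u w) {S : Finset V}
    (hoff : ∀ v ∉ S, #(G.neighborFinset v \ S) + 1 ≤ #(G.neighborFinset v ∩ S)) :
    Fintype.card V * (⌈((G.minDegree : ℝ) + 1) / 2⌉ : ℝ) ≤ μ * #S := by
  set c : ℤ := ⌈((G.minDegree : ℝ) + 1) / 2⌉
  rcases Sᶜ.eq_empty_or_nonempty with hT | hT
  · rw [compl_eq_empty_iff] at hT
    subst hT
    have hu : 1 ≤ G.degree u := (G.degree_pos_iff_exists_adj u).mpr ⟨w, huw⟩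
    have hcu : c ≤ G.degree u := by
      simpa using G.ceil_minDegree_add_one_div_two_le (S := univ) (by
        rw [sdiff_eq_empty_iff_subset.mpr (subset_univ _), inter_univ]; simpa using hu)
    rw [card_univ, mul_comm]
    gcongr
    exact (Int.cast_le.mpr hcu).trans (degree_le_of_lapMatrix_le hμ u)
  · have hcut : (#Sᶜ : ℝ) * c ≤ ∑ v ∈ Sᶜ, (#(G.neighborFinset v ∩ S) : ℝ) := by
      simpa using sum_le_sum fun v hv ↦ Int.cast_le (R := ℝ).mpr
        (G.ceil_minDegree_add_one_div_two_le (hoff v (mem_compl.mp hv)))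
    have hm : (0 : ℝ) < #Sᶜ := Nat.cast_pos.mpr hT.card_pos
    refine le_of_mul_le_mul_right ?_ hm
    linarith [card_mul_sum_card_neighborFinset_inter_le hμ S,
      mul_le_mul_of_nonneg_left hcut (Nat.cast_nonneg (Fintype.card V))]

end RayleighBound

end SimpleGraph

theorem stmt_10_general {V : Type*} [Fintype V] [DecidableEq V]
    (G : SimpleGraph V) [DecidableRel G.Adj]
    (n : ℕ) (hn : Fintype.card V = n)
    (d : ℕ) (hd : G.minDegree = d)
    (hedge : 0 < G.edgeFinset.card)
    (mus : ℝ)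
    (hmus : ∃ hL : (G.lapMatrix ℝ).IsHermitian, IsLargest hL.eigenvalues mus)
    (S : Finset V)
    (hoff : ∀ v ∉ S, (G.neighborFinset v \ S).card + 1 ≤ (G.neighborFinset v ∩ S).card)
    :
    ⌈(n : ℝ) / mus * ((⌈((d : ℝ) + 1) / 2⌉ : ℤ) : ℝ)⌉ ≤ (S.card : ℤ) := by
  subst hn hd
  obtain ⟨hL, -, hmax⟩ := hmus
  have hμ := hL.dotProduct_mulVec_le hmax
  obtain ⟨u, w, huw⟩ := ne_bot_iff_exists_adj.mp (edgeFinset_nonempty.mp (card_pos.mp hedge))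
  have hμ_pos : 0 < mus := calc
    (0 : ℝ) < G.degree u := Nat.cast_pos.mpr ((G.degree_pos_iff_exists_adj u).mpr ⟨w, huw⟩)
    _ ≤ mus := degree_le_of_lapMatrix_le hμ u
  rw [Int.ceil_le, div_mul_eq_mul_div, div_le_iff₀ hμ_pos]
  push_cast
  linarith [card_mul_ceil_le hμ huw hoff]

theorem stmt_10 {V : Type*} [Fintype V] [DecidableEq V]
    (G : SimpleGraph V) [DecidableRel G.Adj]
    (n : ℕ) (hn : Fintype.card V = n)
    (d : ℕ) (hd : G.minDegree = d)
    (hedge : 0 < G.edgeFinset.card)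
    (mus : ℝ)
    (hmus : ∃ hL : (G.lapMatrix ℝ).IsHermitian, IsLargest hL.eigenvalues mus)
    (S : Finset V) (hS : S.Nonempty)
    (hoff : ∀ v ∉ S, (G.neighborFinset v \ S).card + 1 ≤ (G.neighborFinset v ∩ S).card)
    :
    ⌈(n : ℝ) / mus * ((⌈((d : ℝ) + 1) / 2⌉ : ℤ) : ℝ)⌉ ≤ (S.card : ℤ) :=
  stmt_10_general G n hn d hd hedge mus hmus S hoff
end
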